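/- For real t ≠ C, ∫_{ℝ²} |U|² dx dy = 2π where U(z) = i(z² − 2i(t−C))/(|z|² + |z² + 2i(t−C)|²); for t = C (with U(z) = iz²/(|z|² + |z|⁴) = i e^{2iφ}/(1+|z|²) away from 0), the integral equals π. -/

import Mathlib

open Complex MeasureTheory

/-- z = x + iy -/
noncomputable def zc (x y : ℝ) : ℂ := (x : ℂ) + Complex.I * (y : ℂ)

/-- |z|² + |z² + 2i(t−C)|² -/
noncomputable def denomDS (C t x y : ℝ) : ℝ :=
  (‖zc x y‖)^2 + (‖(zc x y)^2 + 2*Complex.I*((t - C : ℝ) : ℂ)‖)^2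

/-- U = i(z² − 2i(t−C))/(|z|² + |z² + 2i(t−C)|²) -/
noncomputable def UDS (C t : ℝ) : ℝ → ℝ → ℂ := fun x y =>
  Complex.I * ((zc x y)^2 - 2*Complex.I*((t - C : ℝ) : ℂ)) / ((denomDS C t x y : ℝ) : ℂ)

/-!
With `c = 2i(t - C)`, `|U|² = |z² - c|² / (|z|² + |z² + c|²)²`, and this is exactly the pull-back
`|w'(z)|² g(w(z))` of the density `g(w) = (1 + |w|²)⁻²` under the Joukowski map `w(z) = z + c / z`.
As `∫ g = π`, the integral is `π` times the number of sheets of `w`. For `c ≠ 0`, `w` sends the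
circle `|z|² = |c|` into the line `ℝ √c` and maps each of the regions `|z|² > |c|` and
`0 < |z|² < |c|` (exchanged by `z ↦ c / z`, under which `w` is invariant) injectively onto the
complement of that line, so the integral is `2π`. For `c = 0`, `w` is the identity.
-/

open Set ComplexConjugate

noncomputable def sphericalDensity (u : ℂ) : ℝ := ((1 + ‖u‖ ^ 2) ^ 2)⁻¹

noncomputable def joukowski (c z : ℂ) : ℂ := z + c / z

noncomputable def willmoreDensity (c z : ℂ) : ℝ :=
  ‖z ^ 2 - c‖ ^ 2 / (‖z‖ ^ 2 + ‖z ^ 2 + c‖ ^ 2) ^ 2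

theorem integrable_sphericalDensity : Integrable sphericalDensity := by
  have h := integrable_rpow_neg_one_add_norm_sq (E := ℂ) (μ := volume) (r := 4)
    (by rw [Complex.finrank_real_complex]; norm_num)
  refine h.congr (Filter.Eventually.of_forall fun u => ?_)
  dsimp only
  rw [sphericalDensity, show -(4 : ℝ) / 2 = -(2 : ℕ) by norm_num, Real.rpow_neg (by positivity),
    Real.rpow_natCast]

theorem integral_Ioi_mul_inv_one_add_sq_sq :
    ∫ r in Ioi (0 : ℝ), r * ((1 + r ^ 2) ^ 2)⁻¹ = 1 / 2 := by
  have hderiv : ∀ r ∈ Ici (0 : ℝ),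
      HasDerivAt (fun r : ℝ => -(2 * (1 + r ^ 2))⁻¹) (r * ((1 + r ^ 2) ^ 2)⁻¹) r := by
    intro r _
    have h := ((((hasDerivAt_pow 2 r).const_add 1).const_mul 2).fun_inv (by positivity)).fun_neg
    refine h.congr_deriv ?_
    norm_num
    field_simp
  have htend : Filter.Tendsto (fun r : ℝ => -(2 * (1 + r ^ 2))⁻¹) Filter.atTop (nhds 0) := by
    rw [← neg_zero]
    refine (Filter.Tendsto.inv_tendsto_atTop ?_).neg
    exact Filter.tendsto_atTop_add_const_left _ _ (Filter.tendsto_pow_atTop two_ne_zero)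
      |>.const_mul_atTop two_pos
  rw [integral_Ioi_of_hasDerivAt_of_nonneg' hderiv (fun r (hr : 0 < r) => by positivity) htend]
  norm_num

theorem integral_sphericalDensity : ∫ u, sphericalDensity u = Real.pi := by
  have h := integral_fun_norm_addHaar (volume : Measure ℂ) (fun r => ((1 + r ^ 2) ^ 2)⁻¹)
  simp only [Complex.finrank_real_complex, smul_eq_mul] at h
  simp only [sphericalDensity, h, Measure.real, Complex.volume_ball]
  norm_num [integral_Ioi_mul_inv_one_add_sq_sq]
  ring

theorem hasDerivAt_joukowski (c : ℂ) {z : ℂ} (hz : z ≠ 0) :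
    HasDerivAt (joukowski c) (1 - c / z ^ 2) z := by
  have h := (hasDerivAt_id' z).fun_add ((hasDerivAt_inv hz).const_mul c)
  simp only [← div_eq_mul_inv] at h
  exact h.congr_deriv (by ring)

theorem det_restrictScalars_smulRight_one (a : ℂ) :
    ((ContinuousLinearMap.smulRight (1 : ℂ →L[ℂ] ℂ) a).restrictScalars ℝ).det = normSq a := by
  rw [ContinuousLinearMap.det, ContinuousLinearMap.coe_restrictScalars,
    LinearMap.det_restrictScalars, ← ContinuousLinearMap.det, ContinuousLinearMap.det_smulRight,
    Algebra.norm_complex_eq]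
  simp

theorem normSq_deriv_mul_sphericalDensity_joukowski (c : ℂ) {z : ℂ} (hz : z ≠ 0) :
    normSq (1 - c / z ^ 2) * sphericalDensity (joukowski c z) = willmoreDensity c z := by
  have hderiv : ‖1 - c / z ^ 2‖ * ‖z‖ ^ 2 = ‖z ^ 2 - c‖ := by
    rw [← norm_pow, ← norm_mul]; congr 1; field_simp
  have hval : ‖joukowski c z‖ * ‖z‖ = ‖z ^ 2 + c‖ := by
    rw [joukowski, ← norm_mul]; congr 1; field_simp
  have hz' : 0 < ‖z‖ := norm_pos_iff.mpr hz
  rw [sphericalDensity, willmoreDensity, normSq_eq_norm_sq, ← hderiv, ← hval]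
  field_simp

theorem injOn_joukowski {c : ℂ} {s : Set ℂ} (hs : 0 ∉ s)
    (hprod : ∀ z₁ ∈ s, ∀ z₂ ∈ s, z₁ * z₂ ≠ c) : InjOn (joukowski c) s := by
  intro z₁ h₁ z₂ h₂ heq
  have hz₁ : z₁ ≠ 0 := ne_of_mem_of_not_mem h₁ hs
  have hz₂ : z₂ ≠ 0 := ne_of_mem_of_not_mem h₂ hs
  have hfactor : (z₁ - z₂) * (z₁ * z₂ - c) = 0 := by
    unfold joukowski at heq
    field_simp at heq
    linear_combination heq
  exact sub_eq_zero.1 <|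
    (mul_eq_zero.1 hfactor).resolve_right (sub_ne_zero.2 (hprod z₁ h₁ z₂ h₂))

theorem joukowski_div_self (c : ℂ) {z : ℂ} (hz : z ≠ 0) (hc : c ≠ 0) :
    joukowski c (c / z) = joukowski c z := by
  unfold joukowski; field_simp; ring

theorem exists_joukowski_eq {c : ℂ} (hc : c ≠ 0) (u : ℂ) : ∃ z ≠ 0, joukowski c z = u := by
  obtain ⟨e, he⟩ := IsAlgClosed.exists_pow_nat_eq (u ^ 2 - 4 * c) two_pos
  have hroot : ((u + e) / 2) ^ 2 + c = u * ((u + e) / 2) := by linear_combination he / 4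
  have hz : (u + e) / 2 ≠ 0 := fun h => hc (by simpa [h] using hroot)
  refine ⟨_, hz, ?_⟩
  generalize (u + e) / 2 = z at hz hroot ⊢
  rw [joukowski]
  field_simp
  linear_combination hroot

theorem joukowski_mem_span_of_norm_eq {d z : ℂ} (hz : ‖z‖ = ‖d‖) :
    joukowski (d ^ 2) z ∈ Submodule.span ℝ {d} := by
  rcases eq_or_ne d 0 with rfl | hd
  · simp_all [joukowski]
  have hz0 : z ≠ 0 := by rintro rfl; simp [eq_comm, hd] at hz
  -- on `‖z‖ = ‖d‖`, `d ^ 2 / z = d * conj (z / d)`, so `joukowski (d ^ 2) z = 2 re (z / d) • d`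
  refine Submodule.mem_span_singleton.2 ⟨2 * (z / d).re, ?_⟩
  have hzz : conj z * z = d * conj d := by
    rw [mul_comm, mul_conj, mul_conj, normSq_eq_norm_sq, normSq_eq_norm_sq, hz]
  have hre : ((2 * (z / d).re : ℝ) : ℂ) = z / d + conj (z / d) := by
    rw [add_conj]
  have hd' : conj d ≠ 0 := by simpa using hd
  rw [real_smul, hre, map_div₀, joukowski]
  field_simp
  linear_combination d * hzz

theorem volume_compl_image_joukowski_eq_zero {d : ℂ} (hd : d ≠ 0) {s : Set ℂ}
    (hs : ∀ z ≠ 0, ‖z‖ ≠ ‖d‖ → z ∈ s ∨ d ^ 2 / z ∈ s) :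
    volume (joukowski (d ^ 2) '' s)ᶜ = 0 := by
  have hspan : Submodule.span ℝ {d} ≠ ⊤ := by
    intro h
    have := finrank_span_singleton (K := ℝ) hd
    rw [h, finrank_top, Complex.finrank_real_complex] at this
    norm_num at this
  refine measure_mono_null (fun u hu => ?_) (Measure.addHaar_submodule volume _ hspan)
  by_contra hu'
  obtain ⟨z, hz, rfl⟩ := exists_joukowski_eq (pow_ne_zero 2 hd) u
  rcases hs z hz (fun h => hu' (joukowski_mem_span_of_norm_eq h)) with h | h
  · exact hu ⟨z, h, rfl⟩
  · exact hu ⟨_, h, joukowski_div_self _ hz (pow_ne_zero 2 hd)⟩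

theorem hasFDerivWithinAt_joukowski (c : ℂ) {z : ℂ} (hz : z ≠ 0) (s : Set ℂ) :
    HasFDerivWithinAt (joukowski c)
      ((ContinuousLinearMap.smulRight (1 : ℂ →L[ℂ] ℂ) (1 - c / z ^ 2)).restrictScalars ℝ) s z :=
  ((hasDerivAt_joukowski c hz).hasFDerivAt.restrictScalars ℝ).hasFDerivWithinAt

theorem eqOn_abs_det_smul_sphericalDensity_joukowski (c : ℂ) {s : Set ℂ} (hs : 0 ∉ s) :
    EqOn (fun z => |((ContinuousLinearMap.smulRight (1 : ℂ →L[ℂ] ℂ)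
      (1 - c / z ^ 2)).restrictScalars ℝ).det| • sphericalDensity (joukowski c z))
      (willmoreDensity c) s := fun z hz => by
  dsimp only
  rw [det_restrictScalars_smulRight_one, abs_of_nonneg (normSq_nonneg _), smul_eq_mul,
    normSq_deriv_mul_sphericalDensity_joukowski c (ne_of_mem_of_not_mem hz hs)]

theorem integrableOn_willmoreDensity {c : ℂ} {s : Set ℂ} (hs : MeasurableSet s) (h0 : 0 ∉ s)
    (hinj : InjOn (joukowski c) s) : IntegrableOn (willmoreDensity c) s :=
  ((integrableOn_image_iff_integrableOn_abs_det_fderiv_smul volume hs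
    (fun _ hz => hasFDerivWithinAt_joukowski c (ne_of_mem_of_not_mem hz h0) s) hinj _).1
    integrable_sphericalDensity.integrableOn).congr_fun
    (eqOn_abs_det_smul_sphericalDensity_joukowski c h0) hs

theorem setIntegral_willmoreDensity {c : ℂ} {s : Set ℂ} (hs : MeasurableSet s) (h0 : 0 ∉ s)
    (hinj : InjOn (joukowski c) s) (himage : volume (joukowski c '' s)ᶜ = 0) :
    ∫ z in s, willmoreDensity c z = Real.pi := by
  rw [← setIntegral_congr_fun hs (eqOn_abs_det_smul_sphericalDensity_joukowski c h0),
    ← integral_image_eq_integral_abs_det_fderiv_smul volume hs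
      (fun _ hz => hasFDerivWithinAt_joukowski c (ne_of_mem_of_not_mem hz h0) s) hinj,
    setIntegral_congr_set (ae_eq_univ.2 himage), setIntegral_univ, integral_sphericalDensity]

theorem norm_lt_norm_sq_div_iff {d z : ℂ} (hz : z ≠ 0) : ‖d‖ < ‖d ^ 2 / z‖ ↔ ‖z‖ < ‖d‖ := by
  rcases eq_or_ne d 0 with rfl | hd
  · simp
  rw [norm_div, norm_pow, lt_div_iff₀ (norm_pos_iff.2 hz), sq,
    mul_lt_mul_iff_right₀ (norm_pos_iff.2 hd)]

theorem norm_sq_div_lt_iff {d z : ℂ} (hd : d ≠ 0) (hz : z ≠ 0) :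
    ‖d ^ 2 / z‖ < ‖d‖ ↔ ‖d‖ < ‖z‖ := by
  rw [norm_div, norm_pow, div_lt_iff₀ (norm_pos_iff.2 hz), sq,
    mul_lt_mul_iff_right₀ (norm_pos_iff.2 hd)]

theorem injOn_joukowski_sq_norm_gt (d : ℂ) : InjOn (joukowski (d ^ 2)) {z | ‖d‖ < ‖z‖} :=
  injOn_joukowski (by simp) fun z₁ h₁ z₂ h₂ h => by
    have := mul_lt_mul'' h₁ h₂ (norm_nonneg d) (norm_nonneg d)
    rw [← norm_mul z₁ z₂, h, norm_pow, sq] at this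
    exact lt_irrefl _ this

theorem injOn_joukowski_sq_norm_lt (d : ℂ) :
    InjOn (joukowski (d ^ 2)) {z | 0 < ‖z‖ ∧ ‖z‖ < ‖d‖} :=
  injOn_joukowski (by simp) fun z₁ h₁ z₂ h₂ h => by
    have := mul_lt_mul'' h₁.2 h₂.2 h₁.1.le h₂.1.le
    rw [← norm_mul z₁ z₂, h, norm_pow, sq] at this
    exact lt_irrefl _ this

theorem volume_compl_image_joukowski_sq_norm_gt {d : ℂ} (hd : d ≠ 0) :
    volume (joukowski (d ^ 2) '' {z | ‖d‖ < ‖z‖})ᶜ = 0 :=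
  volume_compl_image_joukowski_eq_zero hd fun _ hz hzd =>
    (hzd.lt_or_gt.imp_left (norm_lt_norm_sq_div_iff hz).2).symm

theorem volume_compl_image_joukowski_sq_norm_lt {d : ℂ} (hd : d ≠ 0) :
    volume (joukowski (d ^ 2) '' {z | 0 < ‖z‖ ∧ ‖z‖ < ‖d‖})ᶜ = 0 := by
  refine volume_compl_image_joukowski_eq_zero hd fun _ hz hzd => ?_
  rcases hzd.lt_or_gt with h | h
  · exact Or.inl ⟨norm_pos_iff.2 hz, h⟩
  · exact Or.inr ⟨norm_pos_iff.2 (div_ne_zero (pow_ne_zero 2 hd) hz),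
      (norm_sq_div_lt_iff hd hz).2 h⟩

theorem volume_compl_norm_gt_union_norm_lt (d : ℂ) :
    volume ({z : ℂ | ‖d‖ < ‖z‖} ∪ {z | 0 < ‖z‖ ∧ ‖z‖ < ‖d‖})ᶜ = 0 := by
  refine measure_mono_null (fun z hz => ?_)
    (measure_union_null (Measure.addHaar_sphere volume 0 ‖d‖) (measure_singleton 0))
  simp only [mem_compl_iff, mem_union, mem_ofPred_eq, not_or, not_and, not_lt] at hz
  rcases eq_or_ne z 0 with rfl | h
  · exact Or.inr rfl
  · exact Or.inl (mem_sphere_zero_iff_norm.2 (le_antisymm hz.1 (hz.2 (norm_pos_iff.2 h))))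

theorem integral_willmoreDensity_sq {d : ℂ} (hd : d ≠ 0) :
    ∫ z, willmoreDensity (d ^ 2) z = 2 * Real.pi := by
  have hEm : MeasurableSet {z : ℂ | ‖d‖ < ‖z‖} := measurableSet_lt measurable_const measurable_norm
  have hIm : MeasurableSet {z : ℂ | 0 < ‖z‖ ∧ ‖z‖ < ‖d‖} :=
    (measurableSet_lt measurable_const measurable_norm).inter
      (measurableSet_lt measurable_norm measurable_const)
  have hdisj : Disjoint {z : ℂ | ‖d‖ < ‖z‖} {z | 0 < ‖z‖ ∧ ‖z‖ < ‖d‖} :=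
    disjoint_left.2 fun z hE hI => lt_asymm hE hI.2
  rw [← setIntegral_univ,
    setIntegral_congr_set (ae_eq_univ.2 (volume_compl_norm_gt_union_norm_lt d)).symm,
    setIntegral_union hdisj hIm
      (integrableOn_willmoreDensity hEm (by simp) (injOn_joukowski_sq_norm_gt d))
      (integrableOn_willmoreDensity hIm (by simp) (injOn_joukowski_sq_norm_lt d)),
    setIntegral_willmoreDensity hEm (by simp) (injOn_joukowski_sq_norm_gt d)
      (volume_compl_image_joukowski_sq_norm_gt hd),
    setIntegral_willmoreDensity hIm (by simp) (injOn_joukowski_sq_norm_lt d)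
      (volume_compl_image_joukowski_sq_norm_lt hd)]
  ring

theorem integral_willmoreDensity_zero : ∫ z, willmoreDensity 0 z = Real.pi := by
  have hid : ∀ z, joukowski 0 z = z := by simp [joukowski]
  have hinj : InjOn (joukowski 0) {0}ᶜ :=
    injOn_joukowski (by simp) fun z₁ h₁ z₂ h₂ => mul_ne_zero h₁ h₂
  have himage : volume (joukowski 0 '' {0}ᶜ)ᶜ = 0 := by
    simp [hid]
  rw [← setIntegral_willmoreDensity (measurableSet_singleton 0).compl (by simp) hinj himage,
    restrict_compl_singleton]

theorem norm_UDS_sq (C t x y : ℝ) :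
    ‖UDS C t x y‖ ^ 2 = willmoreDensity (2 * I * ((t - C : ℝ) : ℂ)) (zc x y) := by
  rw [UDS, willmoreDensity, norm_div, norm_mul, norm_I, one_mul, norm_real, Real.norm_eq_abs,
    abs_of_nonneg (by rw [denomDS]; positivity), div_pow, denomDS]

theorem integral_norm_UDS_sq (C t : ℝ) :
    ∫ p : ℝ × ℝ, ‖UDS C t p.1 p.2‖ ^ 2 = ∫ z, willmoreDensity (2 * I * ((t - C : ℝ) : ℂ)) z := by
  have hzc : ∀ p : ℝ × ℝ, zc p.1 p.2 = measurableEquivRealProd.symm p := fun p => by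
    apply Complex.ext <;> simp [zc]
  simp only [norm_UDS_sq, hzc]
  exact volume_preserving_equiv_real_prod.symm.integral_comp' _

theorem dsii_willmore_integral (C : ℝ) :
    (∀ t : ℝ, t ≠ C →
      ∫ p : ℝ × ℝ, (‖UDS C t p.1 p.2‖)^2 = 2 * Real.pi) ∧
    (∫ p : ℝ × ℝ, (‖UDS C C p.1 p.2‖)^2 = Real.pi) := by
  refine ⟨fun t ht => ?_, ?_⟩
  · obtain ⟨d, hd⟩ := IsAlgClosed.exists_pow_nat_eq (2 * I * ((t - C : ℝ) : ℂ)) two_pos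
    have hc : 2 * I * ((t - C : ℝ) : ℂ) ≠ 0 := by simp [sub_eq_zero, ht]
    have hd0 : d ≠ 0 := ne_zero_pow two_ne_zero (hd ▸ hc)
    rw [integral_norm_UDS_sq, ← hd, integral_willmoreDensity_sq hd0]
  · rw [integral_norm_UDS_sq, sub_self, ofReal_zero, mul_zero, integral_willmoreDensity_zero]
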